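/- Fix an integer k ≥ 0, and define operators T_0, T_1 on L²(𝕋) by (T_0 f)(z) = f(z²) and (T_1 f)(z) = z^{2k+1} f(z²). Then T_0 and T_1 satisfy the Cuntz relations: T_j*T_i = δ_{i,j}·Id for i,j ∈ {0,1}, and T_0T_0* + T_1T_1* = Id. -/

import Mathlib

/-!
In the orthonormal Fourier basis `eₙ(t) = e^{int}/√(2π)` of `L²(𝕋)` the operators act by
`T₀ eₙ = e_{2n}` and `T₁ eₙ = e_{2n+2k+1}`, i.e. they send the basis injectively into itself.
Such an operator `A` has `A* A = 1`, and `A*` maps `e_{σ n}` back to `eₙ` and kills the basis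
vectors outside the range of `σ`. Since the even and the odd integers partition `ℤ`, all
the Cuntz relations can then be checked on basis vectors.
-/

open MeasureTheory Complex Real
open scoped ComplexConjugate

noncomputable section

instance : Fact (0 < 2 * π) := ⟨by positivity⟩

open Set ContinuousLinearMap

namespace HilbertBasis

variable {ι 𝕜 E : Type*} [RCLike 𝕜] [NormedAddCommGroup E] [InnerProductSpace 𝕜 E]
  (b : HilbertBasis ι 𝕜 E)

theorem ext_continuousLinearMap {F : Type*} [AddCommMonoid F] [Module 𝕜 F] [TopologicalSpace F]
    [T2Space F] {A B : E →L[𝕜] F} (h : ∀ i, A (b i) = B (b i)) : A = B :=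
  ext_on (Submodule.dense_iff_topologicalClosure_eq_top.mpr b.dense_span) (forall_mem_range.mpr h)

theorem ext_inner {x y : E} (h : ∀ i, inner 𝕜 (b i) x = inner 𝕜 (b i) y) : x = y :=
  b.repr.injective <| lp.ext <| funext fun i => by simp only [b.repr_apply_apply, h]

variable [CompleteSpace E] {b} {A B : E →L[𝕜] E} {σ τ : ι → ι}

theorem adjoint_apply_apply_of_map (hA : ∀ i, A (b i) = b (σ i)) (hσ : σ.Injective) (i : ι) :
    adjoint A (b (σ i)) = b i :=
  b.ext_inner fun j => by
    classical
    rw [adjoint_inner_right, hA, orthonormal_iff_ite.mp b.orthonormal,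
      orthonormal_iff_ite.mp b.orthonormal, hσ.eq_iff]

theorem adjoint_apply_eq_zero_of_map (hA : ∀ i, A (b i) = b (σ i)) {j : ι} (hj : j ∉ range σ) :
    adjoint A (b j) = 0 :=
  b.ext_inner fun i => by
    rw [adjoint_inner_right, hA, inner_zero_right,
      b.orthonormal.inner_eq_zero fun h => hj ⟨i, h⟩]

theorem adjoint_comp_self_eq_one_of_map (hA : ∀ i, A (b i) = b (σ i)) (hσ : σ.Injective) :
    adjoint A ∘L A = 1 :=
  b.ext_continuousLinearMap fun i => by
    rw [comp_apply, hA, adjoint_apply_apply_of_map hA hσ, one_apply_eq_self]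

theorem adjoint_comp_eq_zero_of_map (hA : ∀ i, A (b i) = b (σ i)) (hB : ∀ i, B (b i) = b (τ i))
    (hστ : Disjoint (range σ) (range τ)) : adjoint B ∘L A = 0 :=
  b.ext_continuousLinearMap fun i => by
    rw [comp_apply, hA, adjoint_apply_eq_zero_of_map hB (hστ.notMem_of_mem_left ⟨i, rfl⟩),
      zero_apply]

theorem comp_adjoint_add_comp_adjoint_eq_one_of_map (hA : ∀ i, A (b i) = b (σ i))
    (hB : ∀ i, B (b i) = b (τ i)) (hσ : σ.Injective) (hτ : τ.Injective)
    (hστ : IsCompl (range σ) (range τ)) : A ∘L adjoint A + B ∘L adjoint B = 1 :=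
  b.ext_continuousLinearMap fun j => by
    rw [add_apply, comp_apply, comp_apply, one_apply_eq_self]
    rcases hστ.codisjoint.top_le (mem_univ j) with ⟨i, rfl⟩ | ⟨i, rfl⟩
    · rw [adjoint_apply_apply_of_map hA hσ, hA,
        adjoint_apply_eq_zero_of_map hB (hστ.disjoint.notMem_of_mem_left ⟨i, rfl⟩), map_zero,
        add_zero]
    · rw [adjoint_apply_apply_of_map hB hτ, hB,
        adjoint_apply_eq_zero_of_map hA (hστ.disjoint.notMem_of_mem_right ⟨i, rfl⟩), map_zero,
        zero_add]

end HilbertBasis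

namespace AddCircle

variable {T : ℝ}

theorem fourier_nsmul (d : ℕ) (n : ℤ) (t : AddCircle T) :
    fourier n (d • t) = fourier (d * n) t := by
  rw [fourier_apply, fourier_apply, ← natCast_zsmul, smul_smul, mul_comm]

variable [hT : Fact (0 < T)]

theorem inner_toLp_fourier_volume (i j : ℤ) :
    inner ℂ (ContinuousMap.toLp 2 volume ℂ (fourier i) : Lp ℂ 2 (volume : Measure (AddCircle T)))
      (ContinuousMap.toLp 2 volume ℂ (fourier j)) = T * if i = j then 1 else 0 := by
  rw [ContinuousMap.inner_toLp, volume_eq_smul_haarAddCircle, integral_smul_measure,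
    ← ContinuousMap.inner_toLp, orthonormal_iff_ite.mp orthonormal_fourier,
    ENNReal.toReal_ofReal hT.out.le, real_smul]

/-- The analogue of `fourierLp 2` for `volume`, which has total mass `T` rather than `1`. -/
def fourierLpVolume (n : ℤ) : Lp ℂ 2 (volume : Measure (AddCircle T)) :=
  ((√T : ℂ))⁻¹ • ContinuousMap.toLp 2 volume ℂ (fourier n)

theorem orthonormal_fourierLpVolume : Orthonormal ℂ (fourierLpVolume (T := T)) := by
  rw [orthonormal_iff_ite]
  intro i j
  rw [fourierLpVolume, fourierLpVolume, inner_smul_left, inner_smul_right,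
    inner_toLp_fourier_volume, ← mul_assoc, ← mul_assoc, conj_inv, conj_ofReal, ← mul_inv,
    ← ofReal_mul, Real.mul_self_sqrt hT.out.le, inv_mul_cancel₀ (ofReal_ne_zero.mpr hT.out.ne'),
    one_mul]

theorem span_fourierLpVolume_closure_eq_top :
    (Submodule.span ℂ (range (fourierLpVolume (T := T)))).topologicalClosure = ⊤ := by
  have hdense := (ContinuousMap.toLp_denseRange ℂ (volume : Measure (AddCircle T)) ℂ
    (p := 2) ENNReal.ofNat_ne_top).topologicalClosure_map_submodule span_fourier_closure_eq_top
  rw [Submodule.map_span, ContinuousLinearMap.coe_coe, ← range_comp] at hdense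
  unfold fourierLpVolume
  rwa [← smul_set_range,
    Submodule.span_smul_eq_of_isUnit _ _ (by simp [Real.sqrt_ne_zero'.mpr hT.out])]

def fourierBasisVolume : HilbertBasis ℤ ℂ (Lp ℂ 2 (volume : Measure (AddCircle T))) :=
  HilbertBasis.mk orthonormal_fourierLpVolume span_fourierLpVolume_closure_eq_top.ge

theorem coe_fourierBasisVolume : ⇑(fourierBasisVolume (T := T)) = fourierLpVolume :=
  HilbertBasis.coe_mk _ _

theorem coeFn_fourierLpVolume (n : ℤ) :
    ⇑(fourierLpVolume (T := T) n) =ᵐ[volume] fun t => ((√T : ℂ))⁻¹ * fourier n t := by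
  filter_upwards [Lp.coeFn_smul ((√T : ℂ))⁻¹ (ContinuousMap.toLp 2 volume ℂ (fourier n)),
    ContinuousMap.coeFn_toLp (p := 2) (𝕜 := ℂ) volume (fourier n)] with t hsmul hfourier
  rw [fourierLpVolume, hsmul, Pi.smul_apply, hfourier, smul_eq_mul]

theorem measurePreserving_nsmul {d : ℕ} (hd : d ≠ 0) :
    MeasurePreserving (fun t : AddCircle T => d • t) volume volume := by
  simp_rw [← natCast_zsmul]
  exact Measure.measurePreserving_zsmul volume (Int.natCast_ne_zero.mpr hd)

theorem fourierLpVolume_map_of_ae_eq {d : ℕ} (hd : d ≠ 0) (m : ℤ)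
    {A : Lp ℂ 2 (volume : Measure (AddCircle T)) → Lp ℂ 2 (volume : Measure (AddCircle T))}
    (hA : ∀ f, ⇑(A f) =ᵐ[volume] fun t => fourier m t * f (d • t)) (n : ℤ) :
    A (fourierLpVolume n) = fourierLpVolume (d * n + m) := by
  refine Lp.ext ?_
  filter_upwards [hA (fourierLpVolume n), coeFn_fourierLpVolume (d * n + m),
    (measurePreserving_nsmul hd).quasiMeasurePreserving.ae_eq_comp
      (coeFn_fourierLpVolume n)] with t hAt hbasis hcomp
  simp only [Function.comp_apply] at hcomp
  rw [hAt, hbasis, hcomp, fourier_nsmul, fourier_add]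
  ring

end AddCircle

theorem isCompl_range_two_mul_range_two_mul_add {m : ℤ} (hm : Odd m) :
    IsCompl (range fun n : ℤ => 2 * n) (range fun n : ℤ => 2 * n + m) := by
  have hodd : range (fun n : ℤ => 2 * n + m) = {x | Even x}ᶜ := by
    ext x
    simp only [mem_range, mem_compl_iff, mem_ofPred_eq, Int.not_even_iff_odd]
    refine ⟨fun ⟨n, hn⟩ => hn ▸ (even_two_mul n).add_odd hm, fun hx => ?_⟩
    obtain ⟨n, hn⟩ := hx.sub_odd hm
    exact ⟨n, by omega⟩
  rw [range_two_mul, hodd]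
  exact isCompl_compl

/-- For `k ≥ 0`, the generalized Haar operators
`(T₀f)(z) = f(z²)` and `(T₁f)(z) = z^{2k+1} f(z²)` on `L²(𝕋)` (with
`𝕋 = ℝ/2πℤ`, where `z^{2k+1}` corresponds to the character `fourier (2k+1)`)
satisfy the Cuntz relations `Tⱼ*Tᵢ = δ_{i,j}·Id` and `T₀T₀* + T₁T₁* = Id`. -/
theorem stmt12 (k : ℕ)
    (T0 T1 : Lp ℂ 2 (volume : Measure (AddCircle (2 * π)))
      →L[ℂ] Lp ℂ 2 (volume : Measure (AddCircle (2 * π))))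
    (hT0 : ∀ f : Lp ℂ 2 (volume : Measure (AddCircle (2 * π))),
      ⇑(T0 f) =ᵐ[volume] fun t => f (2 • t))
    (hT1 : ∀ f : Lp ℂ 2 (volume : Measure (AddCircle (2 * π))),
      ⇑(T1 f) =ᵐ[volume] fun t => (fourier (2 * k + 1) t : ℂ) * f (2 • t)) :
    ContinuousLinearMap.adjoint T0 ∘L T0 = 1 ∧
    ContinuousLinearMap.adjoint T1 ∘L T1 = 1 ∧
    ContinuousLinearMap.adjoint T0 ∘L T1 = 0 ∧
    ContinuousLinearMap.adjoint T1 ∘L T0 = 0 ∧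
    T0 ∘L ContinuousLinearMap.adjoint T0 + T1 ∘L ContinuousLinearMap.adjoint T1 = 1 := by
  let b : HilbertBasis ℤ ℂ (Lp ℂ 2 (volume : Measure (AddCircle (2 * π)))) :=
    AddCircle.fourierBasisVolume
  have h0 (n : ℤ) : T0 (b n) = b (2 * n) := by
    have hT0_fourier (f : Lp ℂ 2 (volume : Measure (AddCircle (2 * π)))) :
        ⇑(T0 f) =ᵐ[volume] fun t => fourier 0 t * f (2 • t) := by
      simpa only [fourier_zero, one_mul] using hT0 f
    simpa [b, AddCircle.coe_fourierBasisVolume] using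
      AddCircle.fourierLpVolume_map_of_ae_eq two_ne_zero 0 hT0_fourier n
  have h1 (n : ℤ) : T1 (b n) = b (2 * n + (2 * k + 1)) := by
    simpa [b, AddCircle.coe_fourierBasisVolume] using
      AddCircle.fourierLpVolume_map_of_ae_eq two_ne_zero _ hT1 n
  have hinj0 : Function.Injective fun n : ℤ => 2 * n := mul_right_injective₀ two_ne_zero
  have hinj1 : Function.Injective fun n : ℤ => 2 * n + (2 * k + 1) :=
    fun _ _ h => by simpa using h
  have hparity := isCompl_range_two_mul_range_two_mul_add (odd_two_mul_add_one (k : ℤ))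
  exact ⟨HilbertBasis.adjoint_comp_self_eq_one_of_map h0 hinj0,
    HilbertBasis.adjoint_comp_self_eq_one_of_map h1 hinj1,
    HilbertBasis.adjoint_comp_eq_zero_of_map h1 h0 hparity.disjoint.symm,
    HilbertBasis.adjoint_comp_eq_zero_of_map h0 h1 hparity.disjoint,
    HilbertBasis.comp_adjoint_add_comp_adjoint_eq_one_of_map h0 h1 hinj0 hinj1 hparity⟩
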